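/- For any real k×ℓ matrix A, exactly one of the following two alternatives holds: (i) there exists a vector v ∈ ℝ^k such that every entry of the row vector vᵀA is strictly positive; (ii) there exists a nonzero vector u ∈ ℝ^ℓ with all entries nonnegative such that A u = 0. In particular, (i) and (ii) cannot both hold, and at least one of them holds. -/

import Mathlib

/-!
If `A u = 0` for some nonzero `u ≥ 0`, then `vᵀA > 0` is impossible, since
`0 = v ⬝ A u = (vᵀA) ⬝ u > 0`. Otherwise `0` lies outside the image `A Δ` of the standard simplex
(which normalizes such `u`); this image is convex and compact, so a hyperplane strictly separates
it from `0`, and the normal `v` of that hyperplane has `vᵀA j = v ⬝ A eⱼ > 0` for every column.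
-/

open Matrix

theorem dotProduct_pos_of_pos_of_nonneg_of_ne_zero {R n : Type*} [Fintype n] [Semiring R] [PartialOrder R]
    [IsStrictOrderedRing R] {w u : n → R} (hw : ∀ j, 0 < w j) (hu : 0 ≤ u) (hu0 : u ≠ 0) :
    0 < w ⬝ᵥ u := by
  obtain ⟨j, hj⟩ := Function.ne_iff.mp hu0
  exact Finset.sum_pos' (fun i _ => mul_nonneg (hw i).le (hu i))
    ⟨j, Finset.mem_univ j, mul_pos (hw j) ((hu j).lt_of_ne' hj)⟩

theorem Matrix.mulVec_ne_zero_of_pos_vecMul {R m n : Type*} [Fintype m] [Fintype n] [Semiring R]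
    [PartialOrder R] [IsStrictOrderedRing R] {A : Matrix m n R} {v : m → R}
    (hv : ∀ j, 0 < (v ᵥ* A) j) {u : n → R} (hu : 0 ≤ u) (hu0 : u ≠ 0) : A *ᵥ u ≠ 0 := by
  intro hAu
  have := dotProduct_pos_of_pos_of_nonneg_of_ne_zero hv hu hu0
  rw [← dotProduct_mulVec, hAu, dotProduct_zero] at this
  exact this.false

theorem StrongDual.exists_eq_dotProduct {n : Type*} [Fintype n]
    (f : StrongDual ℝ (n → ℝ)) : ∃ w : n → ℝ, ∀ x, f x = w ⬝ᵥ x := by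
  classical
  exact ⟨(dotProductEquiv ℝ n).symm f.toLinearMap, fun x =>
      (LinearMap.congr_fun ((dotProductEquiv ℝ n).apply_symm_apply f.toLinearMap) x).symm⟩

theorem Matrix.exists_pos_vecMul_of_zero_notMem_image_stdSimplex {m n : Type*} [Fintype m]
    [Fintype n] {A : Matrix m n ℝ} (h : 0 ∉ A.mulVec '' stdSimplex ℝ n) :
    ∃ v : m → ℝ, ∀ j, 0 < (v ᵥ* A) j := by
  classical
  have hconv : Convex ℝ (A.mulVec '' stdSimplex ℝ n) :=
    (convex_stdSimplex ℝ n).linear_image A.mulVecLin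
  have hcomp : IsCompact (A.mulVec '' stdSimplex ℝ n) :=
    (isCompact_stdSimplex ℝ n).image A.mulVecLin.continuous_of_finiteDimensional
  obtain ⟨f, c, hfc, hc0⟩ := geometric_hahn_banach_closed_point hconv hcomp.isClosed h
  obtain ⟨w, hw⟩ := f.exists_eq_dotProduct
  refine ⟨-w, fun j => ?_⟩
  have hcol := hfc _ ⟨Pi.single j 1, single_mem_stdSimplex ℝ j, rfl⟩
  rw [hw, dotProduct_mulVec, dotProduct_single, mul_one] at hcol
  rw [map_zero] at hc0
  rw [neg_vecMul, Pi.neg_apply]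
  linarith

theorem gordan_theorem (k l : ℕ) (A : Matrix (Fin k) (Fin l) ℝ) :
    Xor'
      (∃ v : Fin k → ℝ, ∀ j : Fin l, 0 < Matrix.vecMul v A j)
      (∃ u : Fin l → ℝ, u ≠ 0 ∧ (∀ j : Fin l, 0 ≤ u j) ∧ A.mulVec u = 0) := by
  refine xor_iff_iff_not.mpr ⟨?_, ?_⟩
  · rintro ⟨v, hv⟩ ⟨u, hu0, hu, hAu⟩
    exact A.mulVec_ne_zero_of_pos_vecMul hv hu hu0 hAu
  · intro h
    refine A.exists_pos_vecMul_of_zero_notMem_image_stdSimplex ?_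
    rintro ⟨u, ⟨hu, hu_sum⟩, hAu⟩
    refine h ⟨u, ?_, hu, hAu⟩
    rintro rfl
    simp at hu_sum
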